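/- Fix an action a ∈ A, assume μ(a|x) > 0 for all x ∈ X, 0 < ρ^μ_a < 1, and context conditional independence. Let F be a nonempty finite set of functions f : X × A → [0,1] containing some f* with |f*_{a,1} − f*_{a,0}| > 0, and Ψ a nonempty finite set of functions ψ : Y × A → [0,1] closed under complementation and containing some ψ* with ψ*_{a,1} − ψ*_{a,0} = 1. If (f̂, ψ̂) minimizes L_a over F × Ψ, then |ψ̂_{a,1} − ψ̂_{a,0}| = 1; in particular either (ψ̂_{a,1}, ψ̂_{a,0}) = (1, 0) or (ψ̂_{a,1}, ψ̂_{a,0}) = (0, 1). -/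
import Mathlib


open Finset

variable {X A Y : Type*} [Fintype X] [Fintype A] [Fintype Y]

/-- `d^μ_a = Σ_x d0(x) μ(a|x)` -/
noncomputable def dmu (d0 : X → ℝ) (μ : X → A → ℝ) (a : A) : ℝ :=
  ∑ x, d0 x * μ x a

/-- `ρ^μ_a = (1/d^μ_a) Σ_x d0(x) μ(a|x) R(x,a)` -/
noncomputable def rho (d0 : X → ℝ) (μ : X → A → ℝ) (R : X → A → ℝ) (a : A) : ℝ :=
  (∑ x, d0 x * μ x a * R x a) / dmu d0 μ a

/-- `f_{a,1}` -/
noncomputable def fa1 (d0 : X → ℝ) (μ : X → A → ℝ) (R : X → A → ℝ) (a : A)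
    (f : X → A → ℝ) : ℝ :=
  (∑ x, d0 x * μ x a * R x a * f x a) / (dmu d0 μ a * rho d0 μ R a)

/-- `f_{a,0}` -/
noncomputable def fa0 (d0 : X → ℝ) (μ : X → A → ℝ) (R : X → A → ℝ) (a : A)
    (f : X → A → ℝ) : ℝ :=
  (∑ x, d0 x * μ x a * (1 - R x a) * f x a) / (dmu d0 μ a * (1 - rho d0 μ R a))

/-- `ψ_{a,r} = Σ_y P(y|a,r) ψ(y,a)` (`r : Bool`) -/
noncomputable def psir (P : A → Bool → Y → ℝ) (a : A) (r : Bool) (ψ : Y → A → ℝ) : ℝ :=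
  ∑ y, P a r y * ψ y a

/-- `E_{μ_a}[g(x,y)]` under context conditional independence: conditioned on `(x,a)`,
`y` is drawn from the mixture `(1 - R(x,a))·P(·|a,0) + R(x,a)·P(·|a,1)`. -/
noncomputable def Emu (d0 : X → ℝ) (μ : X → A → ℝ) (R : X → A → ℝ)
    (P : A → Bool → Y → ℝ) (a : A) (g : X → Y → ℝ) : ℝ :=
  (1 / dmu d0 μ a) * ∑ x, ∑ y,
    d0 x * μ x a * ((1 - R x a) * P a false y + R x a * P a true y) * g x y

/-- `E_{μ̃_a}[g(x̃,ỹ)]`, where `μ̃_a` is the product of the x-marginal and the y-marginal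
of `μ_a`. -/
noncomputable def Etilde (d0 : X → ℝ) (μ : X → A → ℝ) (R : X → A → ℝ)
    (P : A → Bool → Y → ℝ) (a : A) (g : X → Y → ℝ) : ℝ :=
  ∑ x, ∑ y, (d0 x * μ x a / dmu d0 μ a) *
    (∑ x', (d0 x' * μ x' a / dmu d0 μ a) *
      ((1 - R x' a) * P a false y + R x' a * P a true y)) * g x y

/-- The contrastive objective `L_a(f,ψ)`. -/
noncomputable def La (d0 : X → ℝ) (μ : X → A → ℝ) (R : X → A → ℝ)
    (P : A → Bool → Y → ℝ) (a : A) (f : X → A → ℝ) (ψ : Y → A → ℝ) : ℝ :=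
  Emu d0 μ R P a (fun x y => (f x a - ψ y a) ^ 2)
    - Etilde d0 μ R P a (fun x y => (f x a - ψ y a) ^ 2)

set_option linter.unusedSectionVars false

private lemma ysum_expand {Y : Type*} [Fintype Y] (q : Y → ℝ) (c v : ℝ) (g : Y → ℝ) :
    ∑ y, c * q y * (v - g y) ^ 2
      = c * (v ^ 2 * (∑ y, q y) - 2 * v * (∑ y, q y * g y) + (∑ y, q y * g y ^ 2)) := by
  have h : ∑ y, c * q y * (v - g y) ^ 2
      = ((∑ y, (c * v ^ 2) * q y) - (∑ y, (c * 2 * v) * (q y * g y)))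
          + ∑ y, c * (q y * g y ^ 2) := by
    rw [← Finset.sum_sub_distrib, ← Finset.sum_add_distrib]
    exact Finset.sum_congr rfl fun y _ => by ring
  rw [h, ← Finset.mul_sum, ← Finset.mul_sum, ← Finset.mul_sum]
  ring

private lemma xsum5 {X : Type*} [Fintype X] (A B C D E : X → ℝ) (b c d e : ℝ) :
    ∑ x, (A x - b * B x + c * C x + d * D x + e * E x)
      = (∑ x, A x) - b * (∑ x, B x) + c * (∑ x, C x) + d * (∑ x, D x) + e * (∑ x, E x) := by
  rw [Finset.sum_add_distrib, Finset.sum_add_distrib, Finset.sum_add_distrib,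
    Finset.sum_sub_distrib, Finset.mul_sum, Finset.mul_sum, Finset.mul_sum, Finset.mul_sum]

private lemma xsum3 {X : Type*} [Fintype X] (A B C : X → ℝ) (b c d : ℝ) :
    ∑ x, (b * A x + c * B x + d * C x)
      = b * (∑ x, A x) + c * (∑ x, B x) + d * (∑ x, C x) := by
  rw [Finset.sum_add_distrib, Finset.sum_add_distrib,
    Finset.mul_sum, Finset.mul_sum, Finset.mul_sum]

private lemma Emu_eq (d0 : X → ℝ) (μ : X → A → ℝ) (R : X → A → ℝ) (P : A → Bool → Y → ℝ)
    (a : A) (hP0 : ∑ y, P a false y = 1) (hP1 : ∑ y, P a true y = 1)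
    (f : X → A → ℝ) (ψ : Y → A → ℝ) :
    Emu d0 μ R P a (fun x y => (f x a - ψ y a) ^ 2)
      = (1 / dmu d0 μ a) *
        ((∑ x, d0 x * μ x a * f x a ^ 2)
          - (2 * (∑ y, P a false y * ψ y a)) * (∑ x, d0 x * μ x a * f x a)
          + (2 * (∑ y, P a false y * ψ y a) - 2 * (∑ y, P a true y * ψ y a))
              * (∑ x, d0 x * μ x a * R x a * f x a)
          + (∑ y, P a false y * ψ y a ^ 2) * (∑ x, d0 x * μ x a)
          + ((∑ y, P a true y * ψ y a ^ 2) - (∑ y, P a false y * ψ y a ^ 2))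
              * (∑ x, d0 x * μ x a * R x a)) := by
  simp only [Emu]
  congr 1
  have hx : ∀ x : X,
      ∑ y, d0 x * μ x a * ((1 - R x a) * P a false y + R x a * P a true y)
          * (f x a - ψ y a) ^ 2
        = (d0 x * μ x a * (1 - R x a))
            * (f x a ^ 2 * (∑ y, P a false y) - 2 * f x a * (∑ y, P a false y * ψ y a)
                + (∑ y, P a false y * ψ y a ^ 2))
          + (d0 x * μ x a * R x a)
            * (f x a ^ 2 * (∑ y, P a true y) - 2 * f x a * (∑ y, P a true y * ψ y a)
                + (∑ y, P a true y * ψ y a ^ 2)) := by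
    intro x
    have hsplit : ∀ y, d0 x * μ x a * ((1 - R x a) * P a false y + R x a * P a true y)
        * (f x a - ψ y a) ^ 2
        = (d0 x * μ x a * (1 - R x a)) * P a false y * (f x a - ψ y a) ^ 2
          + (d0 x * μ x a * R x a) * P a true y * (f x a - ψ y a) ^ 2 := fun y => by ring
    simp_rw [hsplit]
    rw [Finset.sum_add_distrib, ysum_expand, ysum_expand]
  simp_rw [hx, hP0, hP1]
  have hx2 : ∀ x : X,
      (d0 x * μ x a * (1 - R x a))
          * (f x a ^ 2 * 1 - 2 * f x a * (∑ y, P a false y * ψ y a)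
              + (∑ y, P a false y * ψ y a ^ 2))
        + (d0 x * μ x a * R x a)
          * (f x a ^ 2 * 1 - 2 * f x a * (∑ y, P a true y * ψ y a)
              + (∑ y, P a true y * ψ y a ^ 2))
      = (d0 x * μ x a * f x a ^ 2)
        - (2 * (∑ y, P a false y * ψ y a)) * (d0 x * μ x a * f x a)
        + (2 * (∑ y, P a false y * ψ y a) - 2 * (∑ y, P a true y * ψ y a))
            * (d0 x * μ x a * R x a * f x a)
        + (∑ y, P a false y * ψ y a ^ 2) * (d0 x * μ x a)
        + ((∑ y, P a true y * ψ y a ^ 2) - (∑ y, P a false y * ψ y a ^ 2))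
            * (d0 x * μ x a * R x a) := fun x => by ring
  simp_rw [hx2]
  rw [xsum5]

set_option linter.unusedSectionVars false

private lemma Etilde_eq (d0 : X → ℝ) (μ : X → A → ℝ) (R : X → A → ℝ) (P : A → Bool → Y → ℝ)
    (a : A) (hP0 : ∑ y, P a false y = 1) (hP1 : ∑ y, P a true y = 1)
    (f : X → A → ℝ) (ψ : Y → A → ℝ) :
    Etilde d0 μ R P a (fun x y => (f x a - ψ y a) ^ 2)
      = (((∑ x, d0 x * μ x a) - (∑ x, d0 x * μ x a * R x a))
            * ((∑ x, d0 x * μ x a * f x a ^ 2)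
              - 2 * (∑ y, P a false y * ψ y a) * (∑ x, d0 x * μ x a * f x a)
              + (∑ y, P a false y * ψ y a ^ 2) * (∑ x, d0 x * μ x a))
          + (∑ x, d0 x * μ x a * R x a)
            * ((∑ x, d0 x * μ x a * f x a ^ 2)
              - 2 * (∑ y, P a true y * ψ y a) * (∑ x, d0 x * μ x a * f x a)
              + (∑ y, P a true y * ψ y a ^ 2) * (∑ x, d0 x * μ x a)))
        / (dmu d0 μ a * dmu d0 μ a) := by
  simp only [Etilde]
  have hq : ∀ y : Y,
      (∑ x', (d0 x' * μ x' a / dmu d0 μ a) *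
        ((1 - R x' a) * P a false y + R x' a * P a true y))
      = (((∑ x, d0 x * μ x a) - (∑ x, d0 x * μ x a * R x a)) * P a false y
          + (∑ x, d0 x * μ x a * R x a) * P a true y) / dmu d0 μ a := by
    intro y
    have h1 : ∀ x' : X, (d0 x' * μ x' a / dmu d0 μ a) *
        ((1 - R x' a) * P a false y + R x' a * P a true y)
        = ((d0 x' * μ x' a) * (P a false y / dmu d0 μ a)
            - (d0 x' * μ x' a * R x' a) * (P a false y / dmu d0 μ a))
          + (d0 x' * μ x' a * R x' a) * (P a true y / dmu d0 μ a) := fun x' => by ring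
    simp_rw [h1]
    rw [Finset.sum_add_distrib, Finset.sum_sub_distrib, ← Finset.sum_mul, ← Finset.sum_mul,
      ← Finset.sum_mul]
    ring
  simp_rw [hq]
  have hx : ∀ x : X,
      ∑ y, (d0 x * μ x a / dmu d0 μ a) *
          ((((∑ x, d0 x * μ x a) - (∑ x, d0 x * μ x a * R x a)) * P a false y
            + (∑ x, d0 x * μ x a * R x a) * P a true y) / dmu d0 μ a)
          * (f x a - ψ y a) ^ 2
        = (d0 x * μ x a * ((∑ x, d0 x * μ x a) - (∑ x, d0 x * μ x a * R x a))
              / (dmu d0 μ a * dmu d0 μ a))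
            * (f x a ^ 2 * (∑ y, P a false y) - 2 * f x a * (∑ y, P a false y * ψ y a)
                + (∑ y, P a false y * ψ y a ^ 2))
          + (d0 x * μ x a * (∑ x, d0 x * μ x a * R x a) / (dmu d0 μ a * dmu d0 μ a))
            * (f x a ^ 2 * (∑ y, P a true y) - 2 * f x a * (∑ y, P a true y * ψ y a)
                + (∑ y, P a true y * ψ y a ^ 2)) := by
    intro x
    have hsplit : ∀ y : Y, (d0 x * μ x a / dmu d0 μ a) *
          ((((∑ x, d0 x * μ x a) - (∑ x, d0 x * μ x a * R x a)) * P a false y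
            + (∑ x, d0 x * μ x a * R x a) * P a true y) / dmu d0 μ a)
          * (f x a - ψ y a) ^ 2
        = (d0 x * μ x a * ((∑ x, d0 x * μ x a) - (∑ x, d0 x * μ x a * R x a))
              / (dmu d0 μ a * dmu d0 μ a)) * P a false y * (f x a - ψ y a) ^ 2
          + (d0 x * μ x a * (∑ x, d0 x * μ x a * R x a) / (dmu d0 μ a * dmu d0 μ a))
              * P a true y * (f x a - ψ y a) ^ 2 := fun y => by ring
    simp_rw [hsplit]
    rw [Finset.sum_add_distrib, ysum_expand, ysum_expand]
  simp_rw [hx, hP0, hP1]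
  have hx2 : ∀ x : X,
      (d0 x * μ x a * ((∑ x, d0 x * μ x a) - (∑ x, d0 x * μ x a * R x a))
            / (dmu d0 μ a * dmu d0 μ a))
          * (f x a ^ 2 * 1 - 2 * f x a * (∑ y, P a false y * ψ y a)
              + (∑ y, P a false y * ψ y a ^ 2))
        + (d0 x * μ x a * (∑ x, d0 x * μ x a * R x a) / (dmu d0 μ a * dmu d0 μ a))
          * (f x a ^ 2 * 1 - 2 * f x a * (∑ y, P a true y * ψ y a)
              + (∑ y, P a true y * ψ y a ^ 2))
      = ((∑ x, d0 x * μ x a) / (dmu d0 μ a * dmu d0 μ a)) * (d0 x * μ x a * f x a ^ 2)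
        + (((-2) * (((∑ x, d0 x * μ x a) - (∑ x, d0 x * μ x a * R x a))
                * (∑ y, P a false y * ψ y a)
              + (∑ x, d0 x * μ x a * R x a) * (∑ y, P a true y * ψ y a)))
            / (dmu d0 μ a * dmu d0 μ a)) * (d0 x * μ x a * f x a)
        + (((((∑ x, d0 x * μ x a) - (∑ x, d0 x * μ x a * R x a))
                * (∑ y, P a false y * ψ y a ^ 2)
              + (∑ x, d0 x * μ x a * R x a) * (∑ y, P a true y * ψ y a ^ 2))
            / (dmu d0 μ a * dmu d0 μ a)) * (d0 x * μ x a)) := fun x => by ring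
  simp_rw [hx2]
  rw [xsum3]
  ring

private lemma La_eq (d0 : X → ℝ) (μ : X → A → ℝ) (R : X → A → ℝ) (P : A → Bool → Y → ℝ)
    (a : A) (hP0 : ∑ y, P a false y = 1) (hP1 : ∑ y, P a true y = 1)
    (hS : (∑ x, d0 x * μ x a) ≠ 0) (hSR : (∑ x, d0 x * μ x a * R x a) ≠ 0)
    (hSSR : (∑ x, d0 x * μ x a) - (∑ x, d0 x * μ x a * R x a) ≠ 0)
    (f : X → A → ℝ) (ψ : Y → A → ℝ) :
    La d0 μ R P a f ψ
      = -2 * rho d0 μ R a * (1 - rho d0 μ R a)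
        * (fa1 d0 μ R a f - fa0 d0 μ R a f)
        * (psir P a true ψ - psir P a false ψ) := by
  have e0 : (∑ x, d0 x * μ x a * (1 - R x a) * f x a)
      = (∑ x, d0 x * μ x a * f x a) - ∑ x, d0 x * μ x a * R x a * f x a := by
    rw [← Finset.sum_sub_distrib]
    exact Finset.sum_congr rfl fun x _ => by ring
  simp only [La]
  rw [Emu_eq d0 μ R P a hP0 hP1 f ψ, Etilde_eq d0 μ R P a hP0 hP1 f ψ]
  simp only [fa1, fa0, rho, psir, dmu]
  rw [e0]
  field_simp
  ring

/-- if `Ψ` contains a perfect decoder `ψ*` (with `ψ*_{a,1} − ψ*_{a,0} = 1`)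
and is closed under complementation, and `F` contains some `f*` with
`|f*_{a,1} − f*_{a,0}| > 0`, then any minimizer `(f̂,ψ̂)` of `L_a` over `F × Ψ` satisfies
`|ψ̂_{a,1} − ψ̂_{a,0}| = 1`; in particular `(ψ̂_{a,1}, ψ̂_{a,0}) = (1,0)` or `(0,1)`. -/
theorem statement6
    (d0 : X → ℝ) (μ : X → A → ℝ) (R : X → A → ℝ) (P : A → Bool → Y → ℝ) (a : A)
    (hd0 : ∀ x, 0 ≤ d0 x) (hd0sum : ∑ x, d0 x = 1)
    (hμ : ∀ x a', 0 ≤ μ x a') (hμsum : ∀ x, ∑ a', μ x a' = 1)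
    (hμpos : ∀ x, 0 < μ x a)
    (hR : ∀ x a', R x a' ∈ Set.Icc (0:ℝ) 1)
    (hP : ∀ a' r y, 0 ≤ P a' r y) (hPsum : ∀ a' r, ∑ y, P a' r y = 1)
    (hρ0 : 0 < rho d0 μ R a) (hρ1 : rho d0 μ R a < 1)
    (F : Finset (X → A → ℝ)) (hF : F.Nonempty)
    (hFmem : ∀ f ∈ F, ∀ x a', f x a' ∈ Set.Icc (0:ℝ) 1)
    (fstar : X → A → ℝ) (hfstarmem : fstar ∈ F)
    (hfstar : 0 < |fa1 d0 μ R a fstar - fa0 d0 μ R a fstar|)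
    (Ψ : Finset (Y → A → ℝ)) (hΨ : Ψ.Nonempty)
    (hΨmem : ∀ ψ ∈ Ψ, ∀ y a', ψ y a' ∈ Set.Icc (0:ℝ) 1)
    (hΨcl : ∀ ψ ∈ Ψ, (fun y a' => 1 - ψ y a') ∈ Ψ)
    (ψstar : Y → A → ℝ) (hψstarmem : ψstar ∈ Ψ)
    (hψstar : psir P a true ψstar - psir P a false ψstar = 1)
    (fhat : X → A → ℝ) (ψhat : Y → A → ℝ) (hfhat : fhat ∈ F) (hψhat : ψhat ∈ Ψ)
    (hmin : ∀ f ∈ F, ∀ ψ ∈ Ψ, La d0 μ R P a fhat ψhat ≤ La d0 μ R P a f ψ) :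
    |psir P a true ψhat - psir P a false ψhat| = 1 ∧
      ((psir P a true ψhat = 1 ∧ psir P a false ψhat = 0) ∨
        (psir P a true ψhat = 0 ∧ psir P a false ψhat = 1)) := by
  -- positivity of dmu
  have hdpos : 0 < dmu d0 μ a := by
    obtain ⟨x0, hx0⟩ : ∃ x, 0 < d0 x := by
      by_contra h
      push_neg at h
      have hz : ∑ x, d0 x = 0 :=
        Finset.sum_eq_zero fun x _ => le_antisymm (h x) (hd0 x)
      rw [hz] at hd0sum; norm_num at hd0sum
    exact Finset.sum_pos' (fun x _ => mul_nonneg (hd0 x) (hμ x a))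
      ⟨x0, Finset.mem_univ x0, mul_pos hx0 (hμpos x0)⟩
  have hS : (∑ x, d0 x * μ x a) ≠ 0 := ne_of_gt hdpos
  have hSR : (∑ x, d0 x * μ x a * R x a) ≠ 0 := by
    intro h
    rw [rho, dmu, h, zero_div] at hρ0
    exact lt_irrefl 0 hρ0
  have hSSR : (∑ x, d0 x * μ x a) - (∑ x, d0 x * μ x a * R x a) ≠ 0 := by
    intro h
    have hρeq : rho d0 μ R a = 1 := by
      rw [rho, dmu]
      rw [show (∑ x, d0 x * μ x a * R x a) = ∑ x, d0 x * μ x a by linarith]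
      exact div_self hS
    rw [hρeq] at hρ1; exact lt_irrefl 1 hρ1
  set c : ℝ := 2 * rho d0 μ R a * (1 - rho d0 μ R a) with hc
  have hcpos : 0 < c := by
    apply mul_pos (mul_pos two_pos hρ0); linarith
  have key : ∀ f ψ, La d0 μ R P a f ψ
      = -(c * ((fa1 d0 μ R a f - fa0 d0 μ R a f)
          * (psir P a true ψ - psir P a false ψ))) := by
    intro f ψ
    rw [La_eq d0 μ R P a (hPsum a false) (hPsum a true) hS hSR hSSR f ψ, hc]
    ring
  set Df := fa1 d0 μ R a fhat - fa0 d0 μ R a fhat with hDf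
  set Dψ := psir P a true ψhat - psir P a false ψhat with hDψ
  set Ds := fa1 d0 μ R a fstar - fa0 d0 μ R a fstar with hDs
  -- complement of ψstar
  have hψcmem := hΨcl ψstar hψstarmem
  have hψcT : ∀ r, psir P a r (fun y a' => 1 - ψstar y a') = 1 - psir P a r ψstar := by
    intro r
    simp only [psir, mul_sub, mul_one, Finset.sum_sub_distrib, hPsum a r]
  have hψcd : psir P a true (fun y a' => 1 - ψstar y a')
      - psir P a false (fun y a' => 1 - ψstar y a') = -1 := by
    rw [hψcT true, hψcT false]; linarith
  -- four consequences of minimality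
  have m1 : Ds ≤ Df * Dψ := by
    have h := hmin fstar hfstarmem ψstar hψstarmem
    rw [key, key, hψstar, mul_one] at h
    rw [← hDf, ← hDψ, ← hDs] at h
    have h2 : c * Ds ≤ c * (Df * Dψ) := by linarith
    exact le_of_mul_le_mul_left h2 hcpos
  have m2 : -Ds ≤ Df * Dψ := by
    have h := hmin fstar hfstarmem _ hψcmem
    rw [key, key, hψcd] at h
    rw [← hDf, ← hDψ, ← hDs] at h
    have h2 : c * (-Ds) ≤ c * (Df * Dψ) := by nlinarith
    exact le_of_mul_le_mul_left h2 hcpos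
  have m3 : Df ≤ Df * Dψ := by
    have h := hmin fhat hfhat ψstar hψstarmem
    rw [key, key, hψstar, mul_one] at h
    rw [← hDf, ← hDψ] at h
    have h2 : c * Df ≤ c * (Df * Dψ) := by linarith
    exact le_of_mul_le_mul_left h2 hcpos
  have m4 : -Df ≤ Df * Dψ := by
    have h := hmin fhat hfhat _ hψcmem
    rw [key, key, hψcd] at h
    rw [← hDf, ← hDψ] at h
    have h2 : c * (-Df) ≤ c * (Df * Dψ) := by nlinarith
    exact le_of_mul_le_mul_left h2 hcpos
  have habsDs : |Ds| ≤ Df * Dψ := abs_le.mpr ⟨by linarith, by linarith⟩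
  have habsDf : |Df| ≤ Df * Dψ := abs_le.mpr ⟨by linarith, by linarith⟩
  have hpos : 0 < Df * Dψ := lt_of_lt_of_le hfstar habsDs
  have hDfne : Df ≠ 0 := by
    intro h; rw [h, zero_mul] at hpos; exact lt_irrefl 0 hpos
  -- bounds on psir
  have hb : ∀ ψ' ∈ Ψ, ∀ r, 0 ≤ psir P a r ψ' ∧ psir P a r ψ' ≤ 1 := by
    intro ψ' hψ' r
    constructor
    · exact Finset.sum_nonneg fun y _ => mul_nonneg (hP a r y) (hΨmem ψ' hψ' y a).1
    · calc (∑ y, P a r y * ψ' y a) ≤ ∑ y, P a r y :=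
            Finset.sum_le_sum fun y _ =>
              mul_le_of_le_one_right (hP a r y) (hΨmem ψ' hψ' y a).2
        _ = 1 := hPsum a r
  obtain ⟨hb1l, hb1u⟩ := hb ψhat hψhat true
  obtain ⟨hb0l, hb0u⟩ := hb ψhat hψhat false
  have habsDψ : |Dψ| ≤ 1 := abs_le.mpr ⟨by rw [hDψ]; linarith, by rw [hDψ]; linarith⟩
  have h6 : Df * Dψ ≤ |Df| * |Dψ| := by rw [← abs_mul]; exact le_abs_self _
  have h8 : 1 ≤ |Dψ| := by nlinarith [abs_pos.mpr hDfne]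
  have h9 : |Dψ| = 1 := le_antisymm habsDψ h8
  refine ⟨h9, ?_⟩
  rcases (abs_eq (by norm_num : (0:ℝ) ≤ 1)).mp h9 with h | h
  · left
    constructor <;> [skip; skip] <;> rw [hDψ] at h <;> linarith
  · right
    constructor <;> rw [hDψ] at h <;> linarith
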